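/- arXiv:1710.08409 — 2 statements merged into one kernel-verified Lean document; each statement's English description precedes it below -/
import Mathlib

section
/- Let N = 2n, fix ρ ∈ ℂ and the orthogonal or symplectic transposition t, let 𝒜 be a unital associative ℂ-algebra, and suppose T(u) ∈ Mat_{2n}(𝒜), defined for u in a cofinite subset of ℂ stable under u ↦ −u−ρ, satisfies the RTT relation R₁₂(u−v) T₁(u) T₂(v) = T₂(v) T₁(u) R₁₂(u−v) for all u ≠ v in its domain. Then S(u) := T(u)·T^t(−u−ρ) satisfies the reflection equation: R₁₂(u−v) S₁(u) R^t₁₂(−u−v−ρ) S₂(v) = S₂(v) R^t₁₂(−u−v−ρ) S₁(u) R₁₂(u−v) for all admissible u, v (u ≠ v, u+v+ρ ≠ 0). -/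
noncomputable section

open Matrix

/-- The permutation operator `P` on `ℂ^{2n} ⊗ ℂ^{2n}`. -/
def permP (N : ℕ) : Matrix (Fin N × Fin N) (Fin N × Fin N) ℂ :=
  fun x y => if x.1 = y.2 ∧ x.2 = y.1 then 1 else 0

/-- The operator `Q = Σ θ_{ij} e_{ij} ⊗ e_{ī j̄}`, `ī = N − i + 1` being `Fin.rev`. -/
def Qop (N : ℕ) (θ : Fin N → ℂ) : Matrix (Fin N × Fin N) (Fin N × Fin N) ℂ :=
  fun x y => if x.2 = Fin.rev x.1 ∧ y.2 = Fin.rev y.1 then θ x.1 * θ y.1 else 0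

/-- The Yang R-matrix `R(u) = I − u⁻¹P` with entries mapped into an algebra `A`. -/
def yangRA (N : ℕ) (A : Type*) [Ring A] [Algebra ℂ A] (u : ℂ) :
    Matrix (Fin N × Fin N) (Fin N × Fin N) A :=
  ((1 : Matrix _ _ ℂ) - u⁻¹ • permP N).map (algebraMap ℂ A)

/-- `R^t(u) = I − u⁻¹Q` with entries mapped into an algebra `A`. -/
def yangRtA (N : ℕ) (θ : Fin N → ℂ) (A : Type*) [Ring A] [Algebra ℂ A] (u : ℂ) :
    Matrix (Fin N × Fin N) (Fin N × Fin N) A :=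
  ((1 : Matrix _ _ ℂ) - u⁻¹ • Qop N θ).map (algebraMap ℂ A)

/-- `X₁ = X ⊗ I`. -/
def op1 {N : ℕ} {A : Type*} [Ring A] (X : Matrix (Fin N) (Fin N) A) :
    Matrix (Fin N × Fin N) (Fin N × Fin N) A :=
  fun x y => if x.2 = y.2 then X x.1 y.1 else 0

/-- `X₂ = I ⊗ X`. -/
def op2 {N : ℕ} {A : Type*} [Ring A] (X : Matrix (Fin N) (Fin N) A) :
    Matrix (Fin N × Fin N) (Fin N × Fin N) A :=
  fun x y => if x.1 = y.1 then X x.2 y.2 else 0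

/-- The transposition `t` (`(e_{ij})^t = θ_{ij} e_{j̄ ī}`) applied entrywise to a
matrix over an algebra. -/
def transpA (N : ℕ) (θ : Fin N → ℂ) {A : Type*} [Ring A] [Algebra ℂ A]
    (M : Matrix (Fin N) (Fin N) A) : Matrix (Fin N) (Fin N) A :=
  fun a b => (θ (Fin.rev b) * θ (Fin.rev a)) • M (Fin.rev b) (Fin.rev a)

namespace Refl

variable {N : ℕ} {A : Type*} [Ring A] [Algebra ℂ A]

def PM (N : ℕ) (A : Type*) [Ring A] [Algebra ℂ A] :
    Matrix (Fin N × Fin N) (Fin N × Fin N) A := (permP N).map (algebraMap ℂ A)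

def QM (N : ℕ) (θ : Fin N → ℂ) (A : Type*) [Ring A] [Algebra ℂ A] :
    Matrix (Fin N × Fin N) (Fin N × Fin N) A := (Qop N θ).map (algebraMap ℂ A)

lemma PM_apply (x y) : PM N A x y = if x.1 = y.2 ∧ x.2 = y.1 then 1 else 0 := by
  simp [PM, permP, Matrix.map_apply, apply_ite (algebraMap ℂ A)]

lemma QM_apply (x y) :
    QM N θ A x y = if x.2 = Fin.rev x.1 ∧ y.2 = Fin.rev y.1
      then algebraMap ℂ A (θ x.1 * θ y.1) else 0 := by
  simp [QM, Qop, Matrix.map_apply, apply_ite (algebraMap ℂ A)]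

lemma PM_mul_apply (M : Matrix (Fin N × Fin N) (Fin N × Fin N) A) (p q) :
    (PM N A * M) p q = M (p.2, p.1) q := by
  rw [Matrix.mul_apply, Fintype.sum_prod_type]
  simp [PM_apply, ite_and, Finset.sum_ite_eq, Finset.sum_ite_eq']

lemma mul_PM_apply (M : Matrix (Fin N × Fin N) (Fin N × Fin N) A) (p q) :
    (M * PM N A) p q = M p (q.2, q.1) := by
  rw [Matrix.mul_apply, Fintype.sum_prod_type]
  simp [PM_apply, ite_and, Finset.sum_ite_eq, Finset.sum_ite_eq']

lemma op1_mul_op2_apply (X Y : Matrix (Fin N) (Fin N) A) (p q) :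
    (op1 X * op2 Y) p q = X p.1 q.1 * Y p.2 q.2 := by
  rw [Matrix.mul_apply, Fintype.sum_prod_type]
  simp [op1, op2, ite_and, Finset.sum_ite_eq, Finset.sum_ite_eq']

lemma op2_mul_op1_apply (X Y : Matrix (Fin N) (Fin N) A) (p q) :
    (op2 Y * op1 X) p q = Y p.2 q.2 * X p.1 q.1 := by
  rw [Matrix.mul_apply, Fintype.sum_prod_type]
  simp [op1, op2, ite_and, Finset.sum_ite_eq, Finset.sum_ite_eq']

lemma mul_QM_apply (θ : Fin N → ℂ) (M : Matrix (Fin N × Fin N) (Fin N × Fin N) A) (p q) :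
    (M * QM N θ A) p q =
      if q.2 = Fin.rev q.1 then ∑ a, (θ a * θ q.1) • M p (a, Fin.rev a) else 0 := by
  rw [Matrix.mul_apply, Fintype.sum_prod_type]
  simp only [QM_apply, ite_and, mul_ite, mul_zero]
  by_cases h : q.2 = Fin.rev q.1
  · simp only [h, if_true]
    congr 1; ext a
    rw [Finset.sum_ite_eq' Finset.univ (Fin.rev a)
      (fun b => M p (a, b) * algebraMap ℂ A (θ a * θ q.1))]
    rw [← Algebra.commutes, ← Algebra.smul_def]
    simp
  · simp [h]

lemma QM_mul_apply (θ : Fin N → ℂ) (M : Matrix (Fin N × Fin N) (Fin N × Fin N) A) (p q) :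
    (QM N θ A * M) p q =
      if p.2 = Fin.rev p.1 then ∑ a, (θ p.1 * θ a) • M (a, Fin.rev a) q else 0 := by
  rw [Matrix.mul_apply, Fintype.sum_prod_type]
  simp only [QM_apply, ite_and, ite_mul, zero_mul]
  by_cases h : p.2 = Fin.rev p.1
  · simp only [h, if_true]
    congr 1; ext a
    rw [Finset.sum_ite_eq' Finset.univ (Fin.rev a)
      (fun b => algebraMap ℂ A (θ p.1 * θ a) * M (a, b) q)]
    rw [← Algebra.smul_def]
    simp
  · simp [h]

set_option linter.unusedSectionVars false

-- sum helpers
lemma sum_pick_eq (g : Fin N → A) (c : Fin N → ℂ) (x : Fin N) :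
    ∑ a, c a • (if x = a then g a else 0) = c x • g x := by
  simp only [smul_ite, smul_zero]
  rw [Finset.sum_ite_eq Finset.univ x (fun a => c a • g a)]
  simp

lemma sum_pick_rev (g : Fin N → A) (c : Fin N → ℂ) (x : Fin N) :
    ∑ a, c a • (if x = Fin.rev a then g a else 0)
      = c (Fin.rev x) • g (Fin.rev x) := by
  have h : ∀ a : Fin N, (x = Fin.rev a) = (Fin.rev x = a) := by
    intro a
    apply propext
    constructor <;> intro h
    · rw [h, Fin.rev_rev]
    · rw [← h, Fin.rev_rev]
  simp only [h]
  exact sum_pick_eq g c (Fin.rev x)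

-- basic P identities
lemma PM_mul_PM : PM N A * PM N A = 1 := by
  ext p q
  rw [PM_mul_apply]
  simp [PM_apply, Matrix.one_apply, Prod.ext_iff, and_comm]

lemma PM_op1 (X : Matrix (Fin N) (Fin N) A) :
    PM N A * op1 X = op2 X * PM N A := by
  ext p q
  rw [PM_mul_apply, mul_PM_apply]
  simp [op1, op2]

lemma PM_op2 (X : Matrix (Fin N) (Fin N) A) :
    PM N A * op2 X = op1 X * PM N A := by
  ext p q
  rw [PM_mul_apply, mul_PM_apply]
  simp [op1, op2]

lemma op1_mul (X Y : Matrix (Fin N) (Fin N) A) :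
    op1 (X * Y) = op1 X * op1 Y := by
  ext p q
  rw [Matrix.mul_apply, Fintype.sum_prod_type]
  simp [op1, Matrix.mul_apply, ite_and, Finset.sum_ite_eq, Finset.sum_ite_eq']

lemma op2_mul (X Y : Matrix (Fin N) (Fin N) A) :
    op2 (X * Y) = op2 X * op2 Y := by
  ext p q
  rw [Matrix.mul_apply, Fintype.sum_prod_type]
  simp [op2, Matrix.mul_apply, ite_and, Finset.sum_ite_eq, Finset.sum_ite_eq']

lemma sum_pick_eq' (g : Fin N → A) (c : Fin N → ℂ) (x : Fin N) :
    ∑ a, c a • (if a = x then g a else 0) = c x • g x := by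
  simp only [smul_ite, smul_zero]
  rw [Finset.sum_ite_eq' Finset.univ x (fun a => c a • g a)]
  simp

lemma sum_pick_rev' (g : Fin N → A) (c : Fin N → ℂ) (x : Fin N) :
    ∑ a, c a • (if Fin.rev a = x then g a else 0)
      = c (Fin.rev x) • g (Fin.rev x) := by
  have h : ∀ a : Fin N, (Fin.rev a = x) = (a = Fin.rev x) := by
    intro a
    apply propext
    constructor <;> intro h
    · rw [← h, Fin.rev_rev]
    · rw [h, Fin.rev_rev]
  simp only [h]
  exact sum_pick_eq' g c (Fin.rev x)

variable (θ : Fin N → ℂ)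

lemma op2_QM (hθ2 : ∀ i, θ i * θ i = 1)
    (hc : ∀ i j : Fin N, θ (Fin.rev i) * θ i = θ (Fin.rev j) * θ j)
    (X : Matrix (Fin N) (Fin N) A) :
    op2 X * QM N θ A = op1 (transpA N θ X) * QM N θ A := by
  ext p q
  rw [mul_QM_apply, mul_QM_apply]
  by_cases h : q.2 = Fin.rev q.1
  · simp only [h, if_true]
    have l1 : ∑ a, (θ a * θ q.1) • (op2 X) p (a, Fin.rev a)
        = (θ p.1 * θ q.1) • X p.2 (Fin.rev p.1) := by
      simp only [op2]
      exact sum_pick_eq (fun a => X p.2 (Fin.rev a)) (fun a => θ a * θ q.1) p.1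
    have l2 : ∑ a, (θ a * θ q.1) • (op1 (transpA N θ X)) p (a, Fin.rev a)
        = (θ (Fin.rev p.2) * θ q.1) • transpA N θ X p.1 (Fin.rev p.2) := by
      simp only [op1]
      exact sum_pick_rev (fun a => transpA N θ X p.1 a) (fun a => θ a * θ q.1) p.2
    rw [l1, l2]
    simp only [transpA, Fin.rev_rev, smul_smul]
    congr 1
    linear_combination (-(θ q.1 * θ p.1)) * hθ2 (Fin.rev p.1)
      - θ q.1 * θ (Fin.rev p.1) * hc p.2 p.1
  · simp [h]

lemma QM_op2 (hθ2 : ∀ i, θ i * θ i = 1)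
    (hc : ∀ i j : Fin N, θ (Fin.rev i) * θ i = θ (Fin.rev j) * θ j)
    (X : Matrix (Fin N) (Fin N) A) :
    QM N θ A * op2 X = QM N θ A * op1 (transpA N θ X) := by
  ext p q
  rw [QM_mul_apply, QM_mul_apply]
  by_cases h : p.2 = Fin.rev p.1
  · simp only [h, if_true]
    have l1 : ∑ a, (θ p.1 * θ a) • (op2 X) (a, Fin.rev a) q
        = (θ p.1 * θ q.1) • X (Fin.rev q.1) q.2 := by
      simp only [op2]
      exact sum_pick_eq' (fun a => X (Fin.rev a) q.2) (fun a => θ p.1 * θ a) q.1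
    have l2 : ∑ a, (θ p.1 * θ a) • (op1 (transpA N θ X)) (a, Fin.rev a) q
        = (θ p.1 * θ (Fin.rev q.2)) • transpA N θ X (Fin.rev q.2) q.1 := by
      simp only [op1]
      exact sum_pick_rev' (fun a => transpA N θ X a q.1) (fun a => θ p.1 * θ a) q.2
    rw [l1, l2]
    simp only [transpA, Fin.rev_rev, smul_smul]
    congr 1
    linear_combination (-(θ p.1 * θ q.1)) * hθ2 (Fin.rev q.1)
      - θ p.1 * θ (Fin.rev q.1) * hc q.2 q.1
  · simp [h]

lemma PM_QM (hrev : ∀ i j : Fin N, θ (Fin.rev i) * θ (Fin.rev j) = θ i * θ j) :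
    PM N A * QM N θ A = QM N θ A * PM N A := by
  ext p q
  rw [PM_mul_apply, mul_PM_apply, QM_apply, QM_apply]
  by_cases h1 : p.2 = Fin.rev p.1
  · by_cases h2 : q.2 = Fin.rev q.1
    · have e1 : p.1 = Fin.rev p.2 := by rw [h1, Fin.rev_rev]
      have e2 : q.1 = Fin.rev q.2 := by rw [h2, Fin.rev_rev]
      rw [if_pos ⟨e1, h2⟩, if_pos ⟨h1, e2⟩]
      congr 1
      calc θ p.2 * θ q.1 = θ (Fin.rev p.1) * θ (Fin.rev q.2) := by rw [← h1, ← e2]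
        _ = θ p.1 * θ q.2 := hrev _ _
    · have h2' : ¬(q.1 = Fin.rev q.2) := fun hh => h2 (by rw [hh, Fin.rev_rev])
      rw [if_neg (fun hh => h2 hh.2), if_neg (fun hh => h2' hh.2)]
  · have h1' : ¬(p.1 = Fin.rev p.2) := fun hh => h1 (by rw [hh, Fin.rev_rev])
    rw [if_neg (fun hh => h1' hh.1), if_neg (fun hh => h1 hh.1)]

lemma mul_QM_mul_op2_apply (M : Matrix (Fin N × Fin N) (Fin N × Fin N) A)
    (Y : Matrix (Fin N) (Fin N) A) (p q) :
    (M * QM N θ A * op2 Y) p q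
      = ∑ a, (θ a * θ q.1) • (M p (a, Fin.rev a) * Y (Fin.rev q.1) q.2) := by
  rw [Matrix.mul_apply, Fintype.sum_prod_type]
  simp only [mul_QM_apply, op2, ite_mul, zero_mul, mul_ite, mul_zero]
  rw [Finset.sum_comm]
  simp only [Finset.sum_ite_eq', Finset.mem_univ, if_true]
  rw [Finset.sum_mul]
  congr 1; ext a
  rw [smul_mul_assoc]

/-- partial transposition in the first tensor factor, applied entrywise -/
def tr1 (θ : Fin N → ℂ) (M : Matrix (Fin N × Fin N) (Fin N × Fin N) A) :
    Matrix (Fin N × Fin N) (Fin N × Fin N) A :=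
  fun p q => (θ (Fin.rev q.1) * θ (Fin.rev p.1)) •
    M (Fin.rev q.1, p.2) (Fin.rev p.1, q.2)

/-- full transposition (both factors), applied entrywise -/
def tr12 (θ : Fin N → ℂ) (M : Matrix (Fin N × Fin N) (Fin N × Fin N) A) :
    Matrix (Fin N × Fin N) (Fin N × Fin N) A :=
  fun p q => ((θ (Fin.rev q.1) * θ (Fin.rev p.1)) * (θ (Fin.rev q.2) * θ (Fin.rev p.2))) •
    M (Fin.rev q.1, Fin.rev q.2) (Fin.rev p.1, Fin.rev p.2)

lemma tr1_sub (M M' : Matrix (Fin N × Fin N) (Fin N × Fin N) A) :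
    tr1 θ (M - M') = tr1 θ M - tr1 θ M' := by
  ext p q; simp [tr1, smul_sub]

lemma tr1_smul (c : ℂ) (M : Matrix (Fin N × Fin N) (Fin N × Fin N) A) :
    tr1 θ (c • M) = c • tr1 θ M := by
  ext p q; simp [tr1, smul_smul, mul_comm]

lemma tr12_sub (M M' : Matrix (Fin N × Fin N) (Fin N × Fin N) A) :
    tr12 θ (M - M') = tr12 θ M - tr12 θ M' := by
  ext p q; simp [tr12, smul_sub]

lemma tr12_smul (c : ℂ) (M : Matrix (Fin N × Fin N) (Fin N × Fin N) A) :
    tr12 θ (c • M) = c • tr12 θ M := by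
  ext p q; simp [tr12, smul_smul, mul_comm]

lemma tr1_op1_op2 (X Y : Matrix (Fin N) (Fin N) A) :
    tr1 θ (op1 X * op2 Y) = op1 (transpA N θ X) * op2 Y := by
  ext p q
  simp only [tr1, op1_mul_op2_apply, transpA, smul_mul_assoc]

lemma tr1_op2_op1 (X Y : Matrix (Fin N) (Fin N) A) :
    tr1 θ (op2 Y * op1 X) = op2 Y * op1 (transpA N θ X) := by
  ext p q
  simp only [tr1, op2_mul_op1_apply, transpA, mul_smul_comm]

lemma tr1_op2_op1_PM (hrev : ∀ i j : Fin N, θ (Fin.rev i) * θ (Fin.rev j) = θ i * θ j)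
    (X Y : Matrix (Fin N) (Fin N) A) :
    tr1 θ (op2 X * op1 Y * PM N A) = op2 X * QM N θ A * op2 Y := by
  ext p q
  rw [mul_QM_mul_op2_apply]
  have hsum : ∑ a, (θ a * θ q.1) • ((op2 X) p (a, Fin.rev a) * Y (Fin.rev q.1) q.2)
      = (θ p.1 * θ q.1) • (X p.2 (Fin.rev p.1) * Y (Fin.rev q.1) q.2) := by
    simp only [op2, ite_mul, zero_mul]
    exact sum_pick_eq (fun a => X p.2 (Fin.rev a) * Y (Fin.rev q.1) q.2)
      (fun a => θ a * θ q.1) p.1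
  rw [hsum]
  simp only [tr1, mul_PM_apply, op2_mul_op1_apply]
  congr 1
  rw [hrev, mul_comm]

lemma tr12_op1_op2 (X Y : Matrix (Fin N) (Fin N) A) :
    tr12 θ (op1 X * op2 Y) = op1 (transpA N θ X) * op2 (transpA N θ Y) := by
  ext p q
  simp only [tr12, op1_mul_op2_apply, transpA, smul_mul_assoc, mul_smul_comm, smul_smul]
  congr 1
  ring

lemma tr12_op2_op1 (X Y : Matrix (Fin N) (Fin N) A) :
    tr12 θ (op2 Y * op1 X) = op2 (transpA N θ Y) * op1 (transpA N θ X) := by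
  ext p q
  simp only [tr12, op2_mul_op1_apply, transpA, smul_mul_assoc, mul_smul_comm, smul_smul]

lemma tr12_op2_op1_PM (X Y : Matrix (Fin N) (Fin N) A) :
    tr12 θ (op2 X * op1 Y * PM N A)
      = op1 (transpA N θ X) * op2 (transpA N θ Y) * PM N A := by
  ext p q
  simp only [tr12, mul_PM_apply, op2_mul_op1_apply, op1_mul_op2_apply, transpA,
    smul_mul_assoc, mul_smul_comm, smul_smul]
  congr 1
  ring

-- sandwich expansion helpers
lemma sand_left (Z M K : Matrix (Fin N × Fin N) (Fin N × Fin N) A) (c : ℂ) :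
    (1 - c • Z) * M * K = M * K - c • (Z * M * K) := by
  rw [sub_mul, one_mul, smul_mul_assoc, sub_mul, smul_mul_assoc]

lemma sand_mid (M Z K : Matrix (Fin N × Fin N) (Fin N × Fin N) A) (c : ℂ) :
    M * (1 - c • Z) * K = M * K - c • (M * Z * K) := by
  rw [mul_sub, mul_one, mul_smul_comm, sub_mul, smul_mul_assoc]

lemma sand_right (M K Z : Matrix (Fin N × Fin N) (Fin N × Fin N) A) (c : ℂ) :
    M * K * (1 - c • Z) = M * K - c • (M * K * Z) := by
  rw [mul_sub, mul_one, mul_smul_comm]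

lemma sand_single_left (Z M : Matrix (Fin N × Fin N) (Fin N × Fin N) A) (c : ℂ) :
    (1 - c • Z) * M = M - c • (Z * M) := by
  rw [sub_mul, one_mul, smul_mul_assoc]

lemma PM_PM_cancel (M : Matrix (Fin N × Fin N) (Fin N × Fin N) A) :
    PM N A * (PM N A * M) = M := by
  rw [← Matrix.mul_assoc, PM_mul_PM, Matrix.one_mul]

lemma conj_three (M1 M2 M3 : Matrix (Fin N × Fin N) (Fin N × Fin N) A) :
    PM N A * (M1 * M2 * M3) * PM N A
      = (PM N A * M1 * PM N A) * (PM N A * M2 * PM N A) * (PM N A * M3 * PM N A) := by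
  simp only [Matrix.mul_assoc, PM_PM_cancel]

lemma conj_two (M1 M2 : Matrix (Fin N × Fin N) (Fin N × Fin N) A) :
    PM N A * (M1 * M2) * PM N A
      = (PM N A * M1 * PM N A) * (PM N A * M2 * PM N A) := by
  simp only [Matrix.mul_assoc, PM_PM_cancel]

lemma conj_op1 (X : Matrix (Fin N) (Fin N) A) :
    PM N A * op1 X * PM N A = op2 X := by
  rw [PM_op1, Matrix.mul_assoc, PM_mul_PM, Matrix.mul_one]

lemma conj_op2 (X : Matrix (Fin N) (Fin N) A) :
    PM N A * op2 X * PM N A = op1 X := by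
  rw [PM_op2, Matrix.mul_assoc, PM_mul_PM, Matrix.mul_one]

lemma conj_R (c : ℂ) :
    PM N A * (1 - c • PM N A) * PM N A = 1 - c • PM N A := by
  rw [mul_sub, mul_one, mul_smul_comm, PM_mul_PM, sub_mul, smul_mul_assoc, one_mul,
    PM_mul_PM]


lemma conj_Rt (hrev : ∀ i j : Fin N, θ (Fin.rev i) * θ (Fin.rev j) = θ i * θ j) (c : ℂ) :
    PM N A * (1 - c • QM N θ A) * PM N A = 1 - c • QM N θ A := by
  rw [mul_sub, mul_one, mul_smul_comm, PM_QM θ hrev, sub_mul, smul_mul_assoc,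
    Matrix.mul_assoc (QM N θ A), PM_mul_PM, Matrix.mul_one]

lemma RQ_comm (hrev : ∀ i j : Fin N, θ (Fin.rev i) * θ (Fin.rev j) = θ i * θ j) (a b : ℂ) :
    (1 - a • PM N A) * (1 - b • QM N θ A) = (1 - b • QM N θ A) * (1 - a • PM N A) := by
  have hxy : (a • PM N A) * (b • QM N θ A) = (b • QM N θ A) * (a • PM N A) := by
    rw [smul_mul_assoc, mul_smul_comm, smul_mul_assoc, mul_smul_comm, PM_QM θ hrev,
      smul_smul, smul_smul, mul_comm a b]
  simp only [mul_sub, sub_mul, mul_one, one_mul]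
  rw [hxy]
  abel

-- the RTT relation rewritten with P moved to the right
lemma rtt_right (X Y : Matrix (Fin N) (Fin N) A) (c : ℂ)
    (h : (1 - c • PM N A) * op1 X * op2 Y = op2 Y * op1 X * (1 - c • PM N A)) :
    op1 X * op2 Y - c • (op2 X * op1 Y * PM N A)
      = op2 Y * op1 X - c • (op2 Y * op1 X * PM N A) := by
  have e : PM N A * op1 X * op2 Y = op2 X * op1 Y * PM N A := by
    rw [PM_op1, Matrix.mul_assoc, PM_op2, ← Matrix.mul_assoc]
  rw [← sand_right, ← h, sand_left, Matrix.mul_assoc (PM N A), ← Matrix.mul_assoc (PM N A), e]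

lemma relE (hθ2 : ∀ i, θ i * θ i = 1)
    (hc : ∀ i j : Fin N, θ (Fin.rev i) * θ i = θ (Fin.rev j) * θ j)
    (hrev : ∀ i j : Fin N, θ (Fin.rev i) * θ (Fin.rev j) = θ i * θ j)
    (X Y : Matrix (Fin N) (Fin N) A) (c : ℂ)
    (h : (1 - c • PM N A) * op1 X * op2 Y = op2 Y * op1 X * (1 - c • PM N A)) :
    op1 (transpA N θ X) * (1 - c • QM N θ A) * op2 Y
      = op2 Y * (1 - c • QM N θ A) * op1 (transpA N θ X) := by
  have h1 := rtt_right X Y c h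
  have h2 := congrArg (tr1 θ) h1
  rw [tr1_sub, tr1_sub, tr1_smul, tr1_smul, tr1_op1_op2, tr1_op2_op1,
    tr1_op2_op1_PM θ hrev, tr1_op2_op1_PM θ hrev] at h2
  rw [sand_mid, sand_mid]
  rw [show op1 (transpA N θ X) * QM N θ A * op2 Y = op2 X * QM N θ A * op2 Y from by
    rw [← op2_QM θ hθ2 hc]]
  rw [show op2 Y * QM N θ A * op1 (transpA N θ X) = op2 Y * QM N θ A * op2 X from by
    rw [Matrix.mul_assoc, ← QM_op2 θ hθ2 hc, ← Matrix.mul_assoc]]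
  exact h2

lemma relE' (hθ2 : ∀ i, θ i * θ i = 1)
    (hc : ∀ i j : Fin N, θ (Fin.rev i) * θ i = θ (Fin.rev j) * θ j)
    (hrev : ∀ i j : Fin N, θ (Fin.rev i) * θ (Fin.rev j) = θ i * θ j)
    (X Y : Matrix (Fin N) (Fin N) A) (c : ℂ)
    (h : (1 - c • PM N A) * op1 X * op2 Y = op2 Y * op1 X * (1 - c • PM N A)) :
    op2 (transpA N θ X) * (1 - c • QM N θ A) * op1 Y
      = op1 Y * (1 - c • QM N θ A) * op2 (transpA N θ X) := by
  have E := relE θ hθ2 hc hrev X Y c h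
  have h2 := congrArg (fun M => PM N A * M * PM N A) E
  rw [conj_three, conj_three, conj_op1, conj_op2, conj_Rt θ hrev] at h2
  exact h2

lemma relD (X Y : Matrix (Fin N) (Fin N) A) (c : ℂ)
    (h : (1 - c • PM N A) * op1 X * op2 Y = op2 Y * op1 X * (1 - c • PM N A)) :
    op1 (transpA N θ X) * op2 (transpA N θ Y) * (1 - c • PM N A)
      = (1 - c • PM N A) * (op2 (transpA N θ Y) * op1 (transpA N θ X)) := by
  have h1 := rtt_right X Y c h
  have h2 := congrArg (tr12 θ) h1
  rw [tr12_sub, tr12_sub, tr12_smul, tr12_smul, tr12_op1_op2, tr12_op2_op1,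
    tr12_op2_op1_PM, tr12_op2_op1_PM] at h2
  rw [sand_right, sand_single_left]
  rw [show op1 (transpA N θ Y) * op2 (transpA N θ X) * PM N A
      = PM N A * (op2 (transpA N θ Y) * op1 (transpA N θ X)) from by
    rw [Matrix.mul_assoc, ← PM_op1, ← Matrix.mul_assoc, ← PM_op2, Matrix.mul_assoc]] at h2
  exact h2

lemma relD' (X Y : Matrix (Fin N) (Fin N) A) (c : ℂ)
    (h : (1 - c • PM N A) * op1 X * op2 Y = op2 Y * op1 X * (1 - c • PM N A)) :
    op2 (transpA N θ X) * op1 (transpA N θ Y) * (1 - c • PM N A)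
      = (1 - c • PM N A) * (op1 (transpA N θ Y) * op2 (transpA N θ X)) := by
  have E := relD θ X Y c h
  have h2 := congrArg (fun M => PM N A * M * PM N A) E
  rw [conj_three, conj_two, conj_two, conj_op1, conj_op2, conj_R] at h2
  exact h2

lemma yangRA_eq (w : ℂ) : _root_.yangRA N A w = 1 - w⁻¹ • PM N A := by
  ext p q
  simp only [_root_.yangRA, PM, Matrix.map_apply, Matrix.sub_apply, Matrix.smul_apply,
    Matrix.one_apply, smul_eq_mul]
  rw [map_sub, RingHom.map_mul, ← Algebra.smul_def]
  congr 1
  split <;> simp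

lemma yangRtA_eq (w : ℂ) : _root_.yangRtA N θ A w = 1 - w⁻¹ • QM N θ A := by
  ext p q
  simp only [_root_.yangRtA, QM, Matrix.map_apply, Matrix.sub_apply, Matrix.smul_apply,
    Matrix.one_apply, smul_eq_mul]
  rw [map_sub, RingHom.map_mul, ← Algebra.smul_def]
  congr 1
  split <;> simp

end Refl

/-- if `T(u)` satisfies the RTT relation on a cofinite domain stable under
`u ↦ −u−ρ`, then `S(u) = T(u)·T^t(−u−ρ)` satisfies the reflection equation
`R₁₂(u−v) S₁(u) R^t₁₂(−u−v−ρ) S₂(v) = S₂(v) R^t₁₂(−u−v−ρ) S₁(u) R₁₂(u−v)`. -/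

theorem S_reflection_equation (n : ℕ) (ρ : ℂ) (θ : Fin (2 * n) → ℂ)
    (hcase : (∀ i, θ i = 1) ∨
      (∀ i : Fin (2 * n), θ i = if (i : ℕ) < n then -1 else 1))
    (A : Type*) [Ring A] [Algebra ℂ A]
    (T : ℂ → Matrix (Fin (2 * n)) (Fin (2 * n)) A)
    (D : Set ℂ) (hD : Dᶜ.Finite) (hstab : ∀ u ∈ D, -u - ρ ∈ D)
    (hRTT : ∀ u ∈ D, ∀ v ∈ D, u ≠ v →
      yangRA (2 * n) A (u - v) * op1 (T u) * op2 (T v) =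
        op2 (T v) * op1 (T u) * yangRA (2 * n) A (u - v)) :
    ∀ u ∈ D, ∀ v ∈ D, u ≠ v → u + v + ρ ≠ 0 →
      yangRA (2 * n) A (u - v) * op1 (T u * transpA (2 * n) θ (T (-u - ρ)))
          * yangRtA (2 * n) θ A (-u - v - ρ) * op2 (T v * transpA (2 * n) θ (T (-v - ρ))) =
        op2 (T v * transpA (2 * n) θ (T (-v - ρ))) * yangRtA (2 * n) θ A (-u - v - ρ)
          * op1 (T u * transpA (2 * n) θ (T (-u - ρ))) * yangRA (2 * n) A (u - v) := by

  intro u hu v hv huv hsum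
  have hu' : -u - ρ ∈ D := hstab u hu
  have hv' : -v - ρ ∈ D := hstab v hv
  -- sign facts
  have hθ2 : ∀ i, θ i * θ i = 1 := by
    rcases hcase with h | h
    · intro i; rw [h i]; ring
    · intro i; rw [h i]; split <;> norm_num
  have hc : ∀ i j : Fin (2 * n), θ (Fin.rev i) * θ i = θ (Fin.rev j) * θ j := by
    rcases hcase with h | h
    · intro i j; rw [h i, h j, h (Fin.rev i), h (Fin.rev j)]
    · intro i j
      have hi := i.isLt
      have hj := j.isLt
      have ri : ((Fin.rev i : Fin (2 * n)) : ℕ) = 2 * n - ((i : ℕ) + 1) := Fin.val_rev i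
      have rj : ((Fin.rev j : Fin (2 * n)) : ℕ) = 2 * n - ((j : ℕ) + 1) := Fin.val_rev j
      rw [h i, h j, h (Fin.rev i), h (Fin.rev j), ri, rj]
      split_ifs <;> first | (exfalso; omega) | norm_num
  have hrev : ∀ i j : Fin (2 * n), θ (Fin.rev i) * θ (Fin.rev j) = θ i * θ j := by
    rcases hcase with h | h
    · intro i j; rw [h i, h j, h (Fin.rev i), h (Fin.rev j)]
    · intro i j
      have hi := i.isLt
      have hj := j.isLt
      have ri : ((Fin.rev i : Fin (2 * n)) : ℕ) = 2 * n - ((i : ℕ) + 1) := Fin.val_rev i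
      have rj : ((Fin.rev j : Fin (2 * n)) : ℕ) = 2 * n - ((j : ℕ) + 1) := Fin.val_rev j
      rw [h i, h j, h (Fin.rev i), h (Fin.rev j), ri, rj]
      split_ifs <;> first | (exfalso; omega) | norm_num
  rw [Refl.op1_mul, Refl.op2_mul, Refl.yangRA_eq, Refl.yangRtA_eq]
  set R : Matrix (Fin (2 * n) × Fin (2 * n)) (Fin (2 * n) × Fin (2 * n)) A :=
    1 - (u - v)⁻¹ • Refl.PM (2 * n) A with hR
  set Rt : Matrix (Fin (2 * n) × Fin (2 * n)) (Fin (2 * n) × Fin (2 * n)) A :=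
    1 - (-u - v - ρ)⁻¹ • Refl.QM (2 * n) θ A with hRt
  set X1 := op1 (T u) with hX1
  set A1 := op1 (transpA (2 * n) θ (T (-u - ρ))) with hA1
  set Y2 := op2 (T v) with hY2
  set B2 := op2 (transpA (2 * n) θ (T (-v - ρ))) with hB2
  -- RTT at (u, v)
  have hRTTuv : R * X1 * Y2 = Y2 * X1 * R := by
    have h0 := hRTT u hu v hv huv
    rw [Refl.yangRA_eq] at h0
    exact h0
  -- relation (B₁) at (−u−ρ, v)
  have hE : A1 * Rt * Y2 = Y2 * Rt * A1 := by
    have hne : (-u - ρ : ℂ) ≠ v := fun hh => hsum (by rw [show v = -u - ρ from hh.symm]; ring)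
    have h0 := hRTT (-u - ρ) hu' v hv hne
    rw [Refl.yangRA_eq] at h0
    have harg : (-u - ρ - v : ℂ) = -u - v - ρ := by ring
    rw [harg] at h0
    exact Refl.relE θ hθ2 hc hrev _ _ _ h0
  -- relation (C) at (−v−ρ, u)
  have hE' : B2 * Rt * X1 = X1 * Rt * B2 := by
    have hne : (-v - ρ : ℂ) ≠ u := fun hh => hsum (by rw [show u = -v - ρ from hh.symm]; ring)
    have h0 := hRTT (-v - ρ) hv' u hu hne
    rw [Refl.yangRA_eq] at h0
    have harg : (-v - ρ - u : ℂ) = -u - v - ρ := by ring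
    rw [harg] at h0
    exact Refl.relE' θ hθ2 hc hrev _ _ _ h0
  -- relation (D') at (−v−ρ, −u−ρ)
  have hD' : B2 * A1 * R = R * (A1 * B2) := by
    have hne : (-v - ρ : ℂ) ≠ -u - ρ := fun hh => huv (by
      have : (u : ℂ) = v := by linear_combination hh
      exact this)
    have h0 := hRTT (-v - ρ) hv' (-u - ρ) hu' hne
    rw [Refl.yangRA_eq] at h0
    have harg : (-v - ρ - (-u - ρ) : ℂ) = u - v := by ring
    rw [harg] at h0
    exact Refl.relD' θ _ _ _ h0
  -- R and Rt commute
  have hComm : ∀ W, R * (Rt * W) = Rt * (R * W) := by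
    intro W
    rw [← Matrix.mul_assoc, Refl.RQ_comm θ hrev, Matrix.mul_assoc]
  -- assemble
  have s1 : A1 * (Rt * (Y2 * B2)) = Y2 * (Rt * (A1 * B2)) := by
    rw [← mul_assoc, ← mul_assoc, hE, mul_assoc, mul_assoc]
  have s2 : ∀ W, R * (X1 * (Y2 * W)) = Y2 * (X1 * (R * W)) := by
    intro W
    rw [← mul_assoc, ← mul_assoc, hRTTuv, mul_assoc, mul_assoc]
  have s4 : R * (A1 * B2) = B2 * (A1 * R) := by
    rw [← hD', mul_assoc]
  have s5 : ∀ W, X1 * (Rt * (B2 * W)) = B2 * (Rt * (X1 * W)) := by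
    intro W
    rw [← mul_assoc, ← mul_assoc, ← hE', mul_assoc, mul_assoc]
  simp only [Matrix.mul_assoc]
  rw [s1, s2, hComm, s4, s5]
end
end

section
/- Let N = 2n, fix ρ ∈ ℂ and the orthogonal or symplectic transposition t (upper/lower sign below), let 𝒜 be a unital associative ℂ-algebra, and suppose T(u) ∈ Mat_{2n}(𝒜), defined for u in a cofinite subset of ℂ stable under u ↦ −u−ρ, satisfies the RTT relation R₁₂(u−v) T₁(u) T₂(v) = T₂(v) T₁(u) R₁₂(u−v) for all u ≠ v in its domain. Then S(u) := T(u)·T^t(−u−ρ) satisfies the symmetry relation S^t(−u−ρ) = S(u) ± (S(u) − S(−u−ρ))/(2u+ρ) for all admissible u with 2u+ρ ≠ 0. -/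
noncomputable section

open Matrix

set_option linter.unusedSectionVars false
set_option maxHeartbeats 1000000

section aux
variable {N : ℕ} {A : Type*} [Ring A] [Algebra ℂ A]

lemma op12_apply (X Y : Matrix (Fin N) (Fin N) A) (a b k l : Fin N) :
    (op1 X * op2 Y) (a, b) (k, l) = X a k * Y b l := by
  simp [Matrix.mul_apply, op1, op2, Fintype.sum_prod_type, ite_and, apply_ite, mul_ite, ite_mul]

lemma op21_apply (X Y : Matrix (Fin N) (Fin N) A) (a b k l : Fin N) :
    (op2 Y * op1 X) (a, b) (k, l) = Y b l * X a k := by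
  simp [Matrix.mul_apply, op2, op1, Fintype.sum_prod_type, ite_and, apply_ite, mul_ite, ite_mul]

lemma triple_left (w : ℂ) (X Y : Matrix (Fin N) (Fin N) A) (i j k l : Fin N) :
    (yangRA N A w * op1 X * op2 Y) (i, j) (k, l)
      = X i k * Y j l - w⁻¹ • (X j k * Y i l) := by
  rw [Matrix.mul_assoc, Matrix.mul_apply]
  simp only [Fintype.sum_prod_type]
  simp only [op12_apply, yangRA, Matrix.map_apply, Matrix.sub_apply, Matrix.smul_apply,
    Matrix.one_apply, permP, Prod.mk.injEq, smul_eq_mul, mul_ite, mul_one, mul_zero, ite_and]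
  simp [sub_mul, ite_mul, Finset.sum_sub_distrib, Algebra.smul_def,
    apply_ite (algebraMap ℂ A), Finset.sum_ite_eq]

lemma triple_right (w : ℂ) (X Y : Matrix (Fin N) (Fin N) A) (i j k l : Fin N) :
    (op2 Y * op1 X * yangRA N A w) (i, j) (k, l)
      = Y j l * X i k - w⁻¹ • (Y j k * X i l) := by
  rw [Matrix.mul_apply]
  simp only [Fintype.sum_prod_type]
  simp only [op21_apply, yangRA, Matrix.map_apply, Matrix.sub_apply, Matrix.smul_apply,
    Matrix.one_apply, permP, Prod.mk.injEq, smul_eq_mul, mul_ite, mul_one, mul_zero, ite_and]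
  simp only [map_sub]
  simp [mul_sub, mul_ite, Finset.sum_sub_distrib, Algebra.smul_def,
    apply_ite (algebraMap ℂ A), Finset.sum_ite_eq, Finset.sum_ite_eq', Algebra.commutes,
    mul_comm]
end aux

/-- if `T(u)` satisfies the RTT relation on a cofinite domain stable under
`u ↦ −u−ρ`, then `S(u) = T(u)·T^t(−u−ρ)` satisfies the symmetry relation
`S^t(−u−ρ) = S(u) ± (S(u) − S(−u−ρ))/(2u+ρ)`, with `ε = +1` in the orthogonal case
and `ε = −1` in the symplectic case. -/
theorem S_symmetry_relation (n : ℕ) (ρ : ℂ) (θ : Fin (2 * n) → ℂ) (ε : ℂ)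
    (hcase : ((∀ i, θ i = 1) ∧ ε = 1) ∨
      ((∀ i : Fin (2 * n), θ i = if (i : ℕ) < n then -1 else 1) ∧ ε = -1))
    (A : Type*) [Ring A] [Algebra ℂ A]
    (T : ℂ → Matrix (Fin (2 * n)) (Fin (2 * n)) A)
    (D : Set ℂ) (hD : Dᶜ.Finite) (hstab : ∀ u ∈ D, -u - ρ ∈ D)
    (hRTT : ∀ u ∈ D, ∀ v ∈ D, u ≠ v →
      yangRA (2 * n) A (u - v) * op1 (T u) * op2 (T v) =
        op2 (T v) * op1 (T u) * yangRA (2 * n) A (u - v)) :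
    ∀ u ∈ D, 2 * u + ρ ≠ 0 →
      transpA (2 * n) θ (T (-u - ρ) * transpA (2 * n) θ (T (-(-u - ρ) - ρ))) =
        T u * transpA (2 * n) θ (T (-u - ρ)) +
          (ε * (2 * u + ρ)⁻¹) •
            (T u * transpA (2 * n) θ (T (-u - ρ))
              - T (-u - ρ) * transpA (2 * n) θ (T (-(-u - ρ) - ρ))) := by
  -- θ facts
  have hθε : ∀ k, θ (Fin.rev k) * θ k = ε := by
    obtain ⟨h, rfl⟩ | ⟨h, rfl⟩ := hcase
    · simp [h]
    · intro k
      have h1 := k.isLt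
      have h2 : (Fin.rev k : ℕ) = 2*n - (k+1) := Fin.val_rev k
      rw [h, h, h2]
      by_cases hk : (k:ℕ) < n
      · rw [if_pos hk, if_neg (by omega)]; ring
      · rw [if_neg hk, if_pos (by omega)]; ring
  have hθ2 : ∀ k, θ k * θ k = 1 := by
    obtain ⟨h, rfl⟩ | ⟨h, rfl⟩ := hcase
    · simp [h]
    · intro k; rw [h]; split <;> ring
  have hεθ : ∀ k, ε * θ k = θ (Fin.rev k) := by
    intro k
    have := hθε k
    have h2 := hθ2 k
    calc ε * θ k = (θ (Fin.rev k) * θ k) * θ k := by rw [this]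
    _ = θ (Fin.rev k) * (θ k * θ k) := by ring
    _ = θ (Fin.rev k) := by rw [h2]; ring
  intro u hu hw
  have hu' : -u - ρ ∈ D := hstab u hu
  have e1 : -(-u - ρ) - ρ = u := by ring
  rw [e1]
  set c : ℂ := (2*u+ρ)⁻¹ with hc
  set v : ℂ := -u - ρ with hv
  have hne : v ≠ u := by
    intro h
    apply hw
    rw [hv] at h
    linear_combination -h
  have hmx := hRTT v hu' u hu hne
  have hvu : (v - u)⁻¹ = -c := by rw [hv, hc]; rw [← inv_neg]; ring_nf
  have hstar : ∀ i j k l, T v i k * T u j l + c • (T v j k * T u i l)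
      = T u j l * T v i k + c • (T u j k * T v i l) := by
    intro i j k l
    have h2 : (yangRA (2*n) A (v-u) * op1 (T v) * op2 (T u)) (i,j) (k,l)
        = (op2 (T u) * op1 (T v) * yangRA (2*n) A (v-u)) (i,j) (k,l) := by rw [hmx]
    rw [triple_left, triple_right, hvu] at h2
    simpa [neg_smul, sub_neg_eq_add] using h2
  -- per-k quadratic relation (rearranged)
  have hq : ∀ i j k : Fin (2*n),
      T v (Fin.rev j) k * T u i (Fin.rev k)
        = T u i (Fin.rev k) * T v (Fin.rev j) k
          + c • (T u i k * T v (Fin.rev j) (Fin.rev k))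
          - c • (T v i k * T u (Fin.rev j) (Fin.rev k)) := by
    intro i j k
    have h := hstar (Fin.rev j) i k (Fin.rev k)
    linear_combination (norm := module) h
  ext i j
  simp only [transpA, Matrix.mul_apply, Matrix.add_apply, Matrix.smul_apply, Matrix.sub_apply,
    Fin.rev_rev, mul_smul_comm, Finset.smul_sum, smul_smul]
  calc ∑ x : Fin (2*n), (θ j.rev * θ i.rev * (θ i * θ x.rev)) • (T v j.rev x * T u i x.rev)
      = ∑ x : Fin (2*n), (ε * (θ j.rev * θ x.rev)) • (T v j.rev x * T u i x.rev) := by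
        refine Finset.sum_congr rfl fun x _ => ?_
        congr 1
        linear_combination (θ j.rev * θ x.rev) * hθε i
    _ = ∑ x : Fin (2*n), ((ε * (θ j.rev * θ x.rev)) • (T u i x.rev * T v j.rev x)
          + ((ε * c) * (θ j.rev * θ x.rev)) • (T u i x * T v j.rev x.rev)
          - ((ε * c) * (θ j.rev * θ x.rev)) • (T v i x * T u j.rev x.rev)) := by
        refine Finset.sum_congr rfl fun x _ => ?_
        rw [hq i j x]
        module
    _ = (∑ x : Fin (2*n), (ε * (θ j.rev * θ x.rev)) • (T u i x.rev * T v j.rev x))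
          + (ε * c) • (∑ x : Fin (2*n), (θ j.rev * θ x.rev) • (T u i x * T v j.rev x.rev))
          - (ε * c) • (∑ x : Fin (2*n), (θ j.rev * θ x.rev) • (T v i x * T u j.rev x.rev)) := by
        rw [Finset.sum_sub_distrib, Finset.sum_add_distrib, Finset.smul_sum, Finset.smul_sum]
        simp only [smul_smul]
    _ = (∑ x : Fin (2*n), (θ j.rev * θ x.rev) • (T u i x * T v j.rev x.rev))
          + (ε * c) • (∑ x : Fin (2*n), (θ j.rev * θ x.rev) • (T u i x * T v j.rev x.rev))
          - (ε * c) • (∑ x : Fin (2*n), (θ j.rev * θ x.rev) • (T v i x * T u j.rev x.rev)) := by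
        congr 1
        congr 1
        refine Fintype.sum_equiv Fin.revPerm _ _ fun x => ?_
        simp only [Fin.revPerm_apply, Fin.rev_rev]
        congr 1
        have h5 := hεθ x.rev
        rw [Fin.rev_rev] at h5
        linear_combination (θ j.rev) * h5
    _ = ∑ x : Fin (2*n), (θ j.rev * θ x.rev) • (T u i x * T v j.rev x.rev) +
          (ε * c) •
            (∑ x : Fin (2*n), (θ j.rev * θ x.rev) • (T u i x * T v j.rev x.rev) -
              ∑ x : Fin (2*n), (θ j.rev * θ x.rev) • (T v i x * T u j.rev x.rev)) := by
        rw [smul_sub]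
        abel
end
end
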